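/- Let f : ℝ^d → ℝ be differentiable with L-Lipschitz gradient and bounded below by f* ∈ ℝ. For gradient descent with step size 0 < η < 1/L, the sum ∑_{j=0}^{∞}‖∇f(x^{(j)})‖² converges, and hence ‖∇f(x^{(j)})‖ → 0 as j → ∞. -/

import Mathlib

open Filter

lemma quad_upper {d : ℕ} (f : EuclideanSpace ℝ (Fin d) → ℝ)
    (f' : EuclideanSpace ℝ (Fin d) → EuclideanSpace ℝ (Fin d))
    (L : ℝ) (hL : 0 < L)
    (hdiff : ∀ x, HasGradientAt f (f' x) x)
    (hlip : ∀ u v, ‖f' u - f' v‖ ≤ L * ‖u - v‖)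
    (x v : EuclideanSpace ℝ (Fin d)) :
    f (x + v) ≤ f x + inner ℝ (f' x) v + L / 2 * ‖v‖ ^ 2 := by
  set φ : ℝ → ℝ := fun t =>
    f x + t * inner ℝ (f' x) v + L / 2 * t ^ 2 * ‖v‖ ^ 2 - f (x + t • v) with hφ
  have hg : ∀ t : ℝ, HasDerivAt (fun s : ℝ => f (x + s • v))
      (inner ℝ (f' (x + t • v)) v) t := by
    intro t
    have hline : HasDerivAt (fun s : ℝ => x + s • v) v t :=
      by simpa using ((hasDerivAt_id t).smul_const v).const_add x
    have := ((hdiff (x + t • v)).hasFDerivAt).comp_hasDerivAt t hline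
    exact this
  have hφ' : ∀ t : ℝ, HasDerivAt φ
      (inner ℝ (f' x) v + L / 2 * (2 * t) * ‖v‖ ^ 2 - inner ℝ (f' (x + t • v)) v) t := by
    intro t
    have h1 : HasDerivAt (fun t : ℝ => f x + t * inner ℝ (f' x) v + L / 2 * t ^ 2 * ‖v‖ ^ 2)
        (inner ℝ (f' x) v + L / 2 * (2 * t) * ‖v‖ ^ 2) t := by
      have ha : HasDerivAt (fun t : ℝ => t * inner ℝ (f' x) v) (inner ℝ (f' x) v) t := by
        simpa using (hasDerivAt_id t).mul_const (inner ℝ (f' x) v : ℝ)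
      have hb : HasDerivAt (fun t : ℝ => L / 2 * t ^ 2 * ‖v‖ ^ 2)
          (L / 2 * (2 * t) * ‖v‖ ^ 2) t := by
        have : HasDerivAt (fun t : ℝ => t ^ 2) (2 * t) t := by
          simpa using hasDerivAt_pow 2 t
        simpa [mul_assoc, mul_comm, mul_left_comm] using
          ((this.const_mul (L / 2)).mul_const (‖v‖ ^ 2))
      exact (ha.const_add (f x)).add hb
    exact h1.sub (hg t)
  have hmono : MonotoneOn φ (Set.Icc (0 : ℝ) 1) := by
    apply monotoneOn_of_deriv_nonneg (convex_Icc 0 1)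
    · exact fun t _ => (hφ' t).differentiableAt.continuousAt.continuousWithinAt
    · intro t ht
      exact (hφ' t).differentiableAt.differentiableWithinAt
    · intro t ht
      rw [(hφ' t).deriv]
      rw [interior_Icc] at ht
      have hip : inner ℝ (f' (x + t • v)) v - inner ℝ (f' x) v ≤ L * t * ‖v‖ ^ 2 := by
        have h1 : (inner ℝ (f' (x + t • v)) v : ℝ) - inner ℝ (f' x) v
            = inner ℝ (f' (x + t • v) - f' x) v := by
          rw [inner_sub_left]
        rw [h1]
        calc (inner ℝ (f' (x + t • v) - f' x) v : ℝ) ≤ ‖f' (x + t • v) - f' x‖ * ‖v‖ :=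
              real_inner_le_norm _ _
          _ ≤ (L * ‖(x + t • v) - x‖) * ‖v‖ := by
              gcongr; exact hlip _ _
          _ = L * t * ‖v‖ ^ 2 := by
              simp [norm_smul, abs_of_nonneg ht.1.le, sq]
              ring
      nlinarith [sq_nonneg ‖v‖, ht.1.le]
  have h01 : φ 0 ≤ φ 1 := hmono (by simp) (by simp) zero_le_one
  have e0 : φ 0 = 0 := by simp [hφ]
  have e1 : φ 1 = f x + inner ℝ (f' x) v + L / 2 * ‖v‖ ^ 2 - f (x + v) := by
    simp [hφ]
  rw [e0, e1] at h01
  linarith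

/-- For `f` differentiable with `L`-Lipschitz gradient and bounded below, gradient
descent with `0 < η < 1/L` has `∑_j ‖∇f(x^{(j)})‖² < ∞` and `‖∇f(x^{(j)})‖ → 0`. -/
theorem stmt_17 {d : ℕ} (f : EuclideanSpace ℝ (Fin d) → ℝ)
    (f' : EuclideanSpace ℝ (Fin d) → EuclideanSpace ℝ (Fin d))
    (L : ℝ) (hL : 0 < L)
    (hdiff : ∀ x, HasGradientAt f (f' x) x)
    (hlip : ∀ u v, ‖f' u - f' v‖ ≤ L * ‖u - v‖)
    (fstar : ℝ) (hbelow : ∀ x, fstar ≤ f x)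
    (η : ℝ) (hη0 : 0 < η) (hη1 : η < 1 / L)
    (x : ℕ → EuclideanSpace ℝ (Fin d))
    (hstep : ∀ j, x (j + 1) = x j - η • f' (x j)) :
    Summable (fun j => ‖f' (x j)‖ ^ 2) ∧
      Tendsto (fun j => ‖f' (x j)‖) atTop (nhds 0) := by
  set c : ℝ := η * (1 - L * η / 2) with hc
  have hLη : L * η < 1 := by
    nlinarith [(lt_div_iff₀ hL).mp hη1]
  have hcpos : 0 < c := by
    have : 1 - L * η / 2 > 1 / 2 := by nlinarith
    nlinarith
  have hdesc : ∀ j, f (x (j + 1)) ≤ f (x j) - c * ‖f' (x j)‖ ^ 2 := by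
    intro j
    have key := quad_upper f f' L hL hdiff hlip (x j) (-(η • f' (x j)))
    have hx1 : x (j + 1) = x j + -(η • f' (x j)) := by
      rw [hstep j]; abel
    rw [hx1]
    have hip : (inner ℝ (f' (x j)) (-(η • f' (x j))) : ℝ) = -(η * ‖f' (x j)‖ ^ 2) := by
      rw [inner_neg_right, real_inner_smul_right, real_inner_self_eq_norm_sq]
    have hnv : ‖-(η • f' (x j))‖ ^ 2 = η ^ 2 * ‖f' (x j)‖ ^ 2 := by
      rw [norm_neg, norm_smul]
      simp [abs_of_nonneg hη0.le, mul_pow]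
    rw [hip, hnv] at key
    calc f (x j + -(η • f' (x j))) ≤ f (x j) + -(η * ‖f' (x j)‖ ^ 2)
          + L / 2 * (η ^ 2 * ‖f' (x j)‖ ^ 2) := key
      _ ≤ f (x j) - c * ‖f' (x j)‖ ^ 2 := by
          rw [hc]; nlinarith [sq_nonneg ‖f' (x j)‖]
  have hsum : Summable (fun j => ‖f' (x j)‖ ^ 2) := by
    apply summable_of_sum_range_le (c := (f (x 0) - fstar) / c)
      (fun n => sq_nonneg _)
    intro n
    have htel : ∀ n, c * ∑ j ∈ Finset.range n, ‖f' (x j)‖ ^ 2 ≤ f (x 0) - f (x n) := by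
      intro n
      induction n with
      | zero => simp
      | succ n ih =>
        rw [Finset.sum_range_succ, mul_add]
        have := hdesc n
        linarith
    have h1 := htel n
    have h2 := hbelow (x n)
    rw [le_div_iff₀ hcpos, mul_comm]
    linarith
  refine ⟨hsum, ?_⟩
  have h0 : Tendsto (fun j => ‖f' (x j)‖ ^ 2) atTop (nhds 0) := hsum.tendsto_atTop_zero
  have := (Real.continuous_sqrt.tendsto 0).comp h0
  simp only [Function.comp_def] at this
  rw [Real.sqrt_zero] at this
  have heq : (fun j => Real.sqrt (‖f' (x j)‖ ^ 2)) = fun j => ‖f' (x j)‖ :=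
    funext fun j => Real.sqrt_sq (norm_nonneg _)
  rwa [heq] at this
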